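/- Let (m_i) be a sequence with each m_i ∈ {2,3,4} such that whenever (m_i, m_{i-1}) = (4,2) one has m_{i-2} = 2. Then limsup_{n→∞} T_{m_n}∘...∘T_{m_1}(0) ≤ 13/31. -/
import Mathlib


open Filter Set MeasureTheory

noncomputable def T (m : ℕ) (x : ℝ) : ℝ := (1 - x) / m


noncomputable def orb (m : ℕ → ℕ) : ℕ → ℝ
  | 0 => 0
  | n + 1 => T (m n) (orb m n)

noncomputable def Lset : Set ℝ :=
  {x | ∃ m : ℕ → ℕ, (∀ i, 2 ≤ m i) ∧ Filter.atTop.liminf (fun n => orb m n) = x}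

lemma orb_bounds (m : ℕ → ℕ) (hm : ∀ i, 2 ≤ m i) (n : ℕ) :
    0 ≤ orb m n ∧ orb m n ≤ 1 / 2 := by
  induction n with
  | zero => simp [orb]
  | succ n ih =>
    have h2 : (2 : ℝ) ≤ (m n : ℝ) := by exact_mod_cast hm n
    have hpos : (0 : ℝ) < (m n : ℝ) := by linarith
    constructor
    · show 0 ≤ (1 - orb m n) / (m n : ℝ)
      apply div_nonneg (by linarith [ih.2]) hpos.le
    · show (1 - orb m n) / (m n : ℝ) ≤ 1 / 2
      rw [div_le_div_iff₀ hpos (by norm_num)]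
      nlinarith [ih.1, ih.2]

lemma orb_eq (m : ℕ → ℕ) (n : ℕ) : orb m (n + 1) = (1 - orb m n) / (m n : ℝ) := rfl

lemma key_step (m : ℕ → ℕ) (hm : ∀ i, m i ∈ ({2, 3, 4} : Set ℕ))
    (hcond : ∀ i, m (i + 2) = 4 → m (i + 1) = 2 → m i = 2)
    (N : ℕ) (c : ℝ) (hc1 : 1/3 ≤ c) (hc2 : c ≤ 1/2)
    (h : ∀ k, N ≤ k → orb m k ≤ c) :
    ∀ k, N + 4 ≤ k → orb m k ≤ (13 + c) / 32 := by
  have hm2 : ∀ i, 2 ≤ m i := by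
    intro i; rcases hm i with h | h | h <;> simp_all <;> omega
  have hb := orb_bounds m hm2
  intro k hk
  obtain ⟨n, rfl⟩ : ∃ n, k = n + 4 := ⟨k - 4, by omega⟩
  -- abbreviations
  have e3 : orb m (n + 4) = (1 - orb m (n + 3)) / (m (n + 3) : ℝ) := orb_eq m (n + 3)
  have e2 : orb m (n + 3) = (1 - orb m (n + 2)) / (m (n + 2) : ℝ) := orb_eq m (n + 2)
  have e1 : orb m (n + 2) = (1 - orb m (n + 1)) / (m (n + 1) : ℝ) := orb_eq m (n + 1)
  have e0 : orb m (n + 1) = (1 - orb m n) / (m n : ℝ) := orb_eq m n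
  have hb0 := hb n
  have hb1 := hb (n + 1)
  have hb2 := hb (n + 2)
  have hb3 := hb (n + 3)
  rcases hm (n + 3) with h3 | h3 | h3
  case inr.inr => -- m (n+3) = 4
    rw [h3] at e3; push_cast at e3
    rw [e3]; linarith [hb3.1, hb3.2]
  case inr.inl => -- m (n+3) = 3
    rw [h3] at e3; push_cast at e3
    rw [e3]; linarith [hb3.1, hb3.2]
  case inl => -- m (n+3) = 2
    rw [h3] at e3; push_cast at e3
    rcases hm (n + 2) with h2 | h2 | h2
    · -- m (n+2) = 2 : orb (n+3) ≥ (1-c)/2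
      rw [h2] at e2; push_cast at e2
      have hc' : orb m (n + 2) ≤ c := h _ (by omega)
      rw [e3]; rw [e2]; linarith
    · -- m (n+2) = 3
      rw [h2] at e2; push_cast at e2
      have hc' : orb m (n + 2) ≤ c := h _ (by omega)
      rw [e3, e2]; linarith
    · -- m (n+2) = 4
      rw [h2] at e2; push_cast at e2
      rcases hm (n + 1) with h1 | h1 | h1
      · -- m (n+1) = 2, so by hcond m n = 2
        have h0 : m n = 2 := hcond n h2 h1
        rw [h1] at e1; push_cast at e1
        rw [h0] at e0; push_cast at e0
        have hw : orb m n ≤ c := h _ (by omega)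
        -- chain: orb(n+1) ≥ (1-c)/2, orb(n+2) ≤ (1+c)/4, orb(n+3) ≥ (3-c)/16, orb(n+4) ≤ (13+c)/32
        rw [e3, e2, e1, e0]; linarith [hb0.1]
      · -- m (n+1) = 3 : orb (n+2) ≤ 1/3
        rw [h1] at e1; push_cast at e1
        rw [e3, e2, e1]; linarith [hb1.1]
      · -- m (n+1) = 4 : orb (n+2) ≤ 1/4
        rw [h1] at e1; push_cast at e1
        rw [e3, e2, e1]; linarith [hb1.1]

theorem stmt9 (m : ℕ → ℕ) (hm : ∀ i, m i ∈ ({2, 3, 4} : Set ℕ))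
    (hcond : ∀ i, m (i + 2) = 4 → m (i + 1) = 2 → m i = 2) :
    Filter.atTop.limsup (fun n => orb m n) ≤ 13 / 31 := by
  have hm2 : ∀ i, 2 ≤ m i := by
    intro i; rcases hm i with h | h | h <;> simp_all <;> omega
  have hb := orb_bounds m hm2
  set c : ℕ → ℝ := fun j => 13/31 + (5/62) * (1/32 : ℝ) ^ j with hc
  have hpow : ∀ j : ℕ, 0 ≤ ((1:ℝ)/32) ^ j ∧ ((1:ℝ)/32) ^ j ≤ 1 := by
    intro j
    constructor
    · positivity
    · exact pow_le_one₀ (by norm_num) (by norm_num)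
  have hcb : ∀ j, 1/3 ≤ c j ∧ c j ≤ 1/2 := by
    intro j
    have := hpow j
    constructor <;> simp only [hc] <;> nlinarith [this.1, this.2]
  have tail : ∀ j, ∀ k, 4 * j ≤ k → orb m k ≤ c j := by
    intro j
    induction j with
    | zero =>
      intro k _
      have := (hb k).2
      simp only [hc]
      norm_num
      linarith
    | succ j ih =>
      have step := key_step m hm hcond (4 * j) (c j) (hcb j).1 (hcb j).2 ih
      intro k hk
      have : orb m k ≤ (13 + c j) / 32 := step k (by omega)
      have heq : (13 + c j) / 32 = c (j + 1) := by
        simp only [hc, pow_succ]; ring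
      linarith [heq ▸ this]
  have hcob : IsCoboundedUnder (· ≤ ·) atTop (fun n => orb m n) := by
    have hbdd : IsBoundedUnder (· ≥ ·) atTop (fun n => orb m n) :=
      ⟨0, Filter.eventually_map.mpr (Filter.Eventually.of_forall fun n => (hb n).1)⟩
    exact hbdd.isCoboundedUnder_le
  have hls : ∀ j, Filter.atTop.limsup (fun n => orb m n) ≤ c j := by
    intro j
    apply Filter.limsup_le_of_le hcob
    filter_upwards [Filter.eventually_ge_atTop (4 * j)] with k hk
    exact tail j k hk
  have htend : Filter.Tendsto c atTop (nhds (13/31)) := by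
    have h0 : Filter.Tendsto (fun j : ℕ => ((1:ℝ)/32) ^ j) atTop (nhds 0) :=
      tendsto_pow_atTop_nhds_zero_of_lt_one (by norm_num) (by norm_num)
    have := (h0.const_mul (5/62 : ℝ)).const_add (13/31 : ℝ)
    simpa [hc] using this
  exact ge_of_tendsto' htend hls
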